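/- Let d ∈ {2,3}, ρ > 0, h > 0, a > 0, ε > 0 with ε²a² < h, and let v, H ∈ ℝ^d with ε²|v|² < 1. Then the (2d+2)×(2d+2) matrix A₀(U) := 𝐉ᵀ B₀(V) 𝐉 is symmetric positive definite. -/

import Mathlib

open Matrix

/-- The Lorentz factor `Γ = (1 − ε²|v|²)^{−1/2}`. -/
noncomputable def lorentz (d : ℕ) (ε : ℝ) (v : Fin d → ℝ) : ℝ :=
  (Real.sqrt (1 - ε ^ 2 * ∑ i, v i ^ 2))⁻¹

/-- `|b|² = ε²Γ⁻²|H|² + ε⁴(v·H)²`, the Minkowski norm squared of the magnetic field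
`d`-vector. -/
noncomputable def bsq (d : ℕ) (ε : ℝ) (v H : Fin d → ℝ) : ℝ :=
  ε ^ 2 * (lorentz d ε v)⁻¹ ^ 2 * (∑ i, H i ^ 2) + ε ^ 4 * (∑ i, v i * H i) ^ 2

/-- `M₀ = Γ⁻¹(I_d + ε²Γ² v⊗v)`. -/
noncomputable def M0rel (d : ℕ) (ε : ℝ) (v : Fin d → ℝ) : Matrix (Fin d) (Fin d) ℝ :=
  (lorentz d ε v)⁻¹ • ((1 : Matrix (Fin d) (Fin d) ℝ)
    + (ε ^ 2 * lorentz d ε v ^ 2) • vecMulVec v v)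

/-- `𝒜₀`, the velocity block of the relativistic MHD symmetrizer `B₀(V)`. -/
noncomputable def calA0 (d : ℕ) (ε ρ h : ℝ) (v H : Fin d → ℝ) :
    Matrix (Fin d) (Fin d) ℝ :=
  (ρ * h * lorentz d ε v + ε ^ 2 * (lorentz d ε v)⁻¹ * ∑ i, H i ^ 2) •
      ((1 : Matrix (Fin d) (Fin d) ℝ) - ε ^ 2 • vecMulVec v v)
    - (ε ^ 2 * (lorentz d ε v)⁻¹ * bsq d ε v H) • vecMulVec v v
    - (ε ^ 2 * (lorentz d ε v)⁻¹) • vecMulVec H H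
    + (ε ^ 4 * (lorentz d ε v)⁻¹ * ∑ i, v i * H i) • (vecMulVec H v + vecMulVec v H)

/-- `𝒜ᵢ`, the velocity block of `Bᵢ(V)`, `i = 1, …, d`. -/
noncomputable def calAi (d : ℕ) (ε ρ h : ℝ) (v H : Fin d → ℝ) (i : Fin d) :
    Matrix (Fin d) (Fin d) ℝ :=
  v i • ((ρ * h * lorentz d ε v + ε ^ 2 * (lorentz d ε v)⁻¹ * ∑ j, H j ^ 2) •
        ((1 : Matrix (Fin d) (Fin d) ℝ) - ε ^ 2 • vecMulVec v v)
      + (ε ^ 2 * (lorentz d ε v)⁻¹) • (bsq d ε v H • vecMulVec v v - vecMulVec H H))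
    + (ε ^ 2 * (lorentz d ε v)⁻¹ * H i) •
        (((lorentz d ε v)⁻¹ ^ 2) • (vecMulVec H v + vecMulVec v H)
          - (2 * ∑ j, v j * H j) •
              ((1 : Matrix (Fin d) (Fin d) ℝ) - ε ^ 2 • vecMulVec v v))
    + (lorentz d ε v)⁻¹ •
        vecMulVec ((ε ^ 2 * ∑ j, v j * H j) • H - bsq d ε v H • v) (Pi.single i 1)
    + (lorentz d ε v)⁻¹ •
        vecMulVec (Pi.single i 1) ((ε ^ 2 * ∑ j, v j * H j) • H - bsq d ε v H • v)

/-- `𝒩ᵢ = (Γ⁻²H + ε²(v·H)v)⊗(eᵢ − ε²vᵢv) − Γ⁻²Hᵢ I_d`. -/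
noncomputable def calNi (d : ℕ) (ε : ℝ) (v H : Fin d → ℝ) (i : Fin d) :
    Matrix (Fin d) (Fin d) ℝ :=
  vecMulVec (((lorentz d ε v)⁻¹ ^ 2) • H + (ε ^ 2 * ∑ j, v j * H j) • v)
      (Pi.single i 1 - (ε ^ 2 * v i) • v)
    - ((lorentz d ε v)⁻¹ ^ 2 * H i) • (1 : Matrix (Fin d) (Fin d) ℝ)

/-- Index type for the `(2d+2) × (2d+2)` matrices of the symmetrized ideal relativistic MHD
system, blocks of sizes `1, d, d, 1`. -/
abbrev RMHDIdx (d : ℕ) := Unit ⊕ Fin d ⊕ Fin d ⊕ Unit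

/-- The symmetrizer `B₀(V)` of ideal relativistic MHD. -/
noncomputable def B0mat (d : ℕ) (ε ρ h a : ℝ) (v H : Fin d → ℝ) :
    Matrix (RMHDIdx d) (RMHDIdx d) ℝ :=
  Matrix.of fun p q =>
    match p, q with
    | Sum.inl _, Sum.inl _ => lorentz d ε v / (ρ * a ^ 2)
    | Sum.inl _, Sum.inr (Sum.inl j) => ε ^ 2 * v j
    | Sum.inr (Sum.inl i), Sum.inl _ => ε ^ 2 * v i
    | Sum.inr (Sum.inl i), Sum.inr (Sum.inl j) => calA0 d ε ρ h v H i j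
    | Sum.inr (Sum.inr (Sum.inl i)), Sum.inr (Sum.inr (Sum.inl j)) => M0rel d ε v i j
    | Sum.inr (Sum.inr (Sum.inr _)), Sum.inr (Sum.inr (Sum.inr _)) => 1
    | _, _ => 0

/-- The matrices `Bᵢ(V)`, `i = 1, …, d`, of the symmetrized ideal relativistic MHD system. -/
noncomputable def Bimat (d : ℕ) (ε ρ h a : ℝ) (v H : Fin d → ℝ) (i : Fin d) :
    Matrix (RMHDIdx d) (RMHDIdx d) ℝ :=
  Matrix.of fun p q =>
    match p, q with
    | Sum.inl _, Sum.inl _ => lorentz d ε v * v i / (ρ * a ^ 2)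
    | Sum.inl _, Sum.inr (Sum.inl j) => if i = j then 1 else 0
    | Sum.inr (Sum.inl j), Sum.inl _ => if i = j then 1 else 0
    | Sum.inr (Sum.inl j), Sum.inr (Sum.inl k) => calAi d ε ρ h v H i j k
    | Sum.inr (Sum.inl j), Sum.inr (Sum.inr (Sum.inl k)) => calNi d ε v H i k j
    | Sum.inr (Sum.inr (Sum.inl j)), Sum.inr (Sum.inl k) => calNi d ε v H i j k
    | Sum.inr (Sum.inr (Sum.inl j)), Sum.inr (Sum.inr (Sum.inl k)) => v i * M0rel d ε v j k
    | Sum.inr (Sum.inr (Sum.inr _)), Sum.inr (Sum.inr (Sum.inr _)) => v i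
    | _, _ => 0

/-- The Jacobian `𝐉 = ∂V/∂U` of the change of unknowns `U = (q, v, H, S) ↦ V = (p, w, H, S)`
in ideal relativistic MHD, with `𝐚 = ε²(|H|²v − (v·H)H)` and `𝐛 = Γ⁻²H + ε²(v·H)v`. -/
noncomputable def Jac (d : ℕ) (ε : ℝ) (v H : Fin d → ℝ) :
    Matrix (RMHDIdx d) (RMHDIdx d) ℝ :=
  Matrix.of fun p q =>
    match p, q with
    | Sum.inl _, Sum.inl _ => 1
    | Sum.inl _, Sum.inr (Sum.inl j) =>
        ε ^ 2 * ((∑ k, H k ^ 2) * v j - (∑ k, v k * H k) * H j)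
    | Sum.inl _, Sum.inr (Sum.inr (Sum.inl j)) =>
        -((lorentz d ε v)⁻¹ ^ 2 * H j + ε ^ 2 * (∑ k, v k * H k) * v j)
    | Sum.inr (Sum.inl i), Sum.inr (Sum.inl j) => lorentz d ε v ^ 2 * M0rel d ε v i j
    | Sum.inr (Sum.inr (Sum.inl i)), Sum.inr (Sum.inr (Sum.inl j)) => if i = j then 1 else 0
    | Sum.inr (Sum.inr (Sum.inr _)), Sum.inr (Sum.inr (Sum.inr _)) => 1
    | _, _ => 0

/-!
Completing the square in the pressure variable `p`, the quadratic form of `B₀` on `(p, y, z, s)`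
is bounded below by `Γ⁻¹ρ(h - ε²a²)|y|² + zᵀM₀z + s²` plus squares: the velocity block `𝒜₀`
splits as `ρhΓ(|y|² - ε²(v·y)²)` plus the magnetic term `ε²Γ⁻¹(|H|²|u|² - (H·u)²)` with
`u = y - ε²(v·y)v`, which is nonnegative by Cauchy–Schwarz, and `Γ⁻² = 1 - ε²|v|²` turns the
remaining pressure–velocity coupling into the subluminal sound speed condition `ε²a² < h`.
So `B₀` is positive definite, and since `𝐉` is block triangular with invertible diagonal blocks
`1, Γ²M₀, I, 1`, so is `𝐉ᵀB₀𝐉`.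
-/

section DotProduct

variable {ι R : Type*} [Fintype ι] [CommRing R]

theorem sum_sq_eq_dotProduct_self (x : ι → R) : ∑ i, x i ^ 2 = x ⬝ᵥ x := by
  simp [dotProduct, sq]

variable [LinearOrder R] [IsStrictOrderedRing R]

theorem dotProduct_self_nonneg (x : ι → R) : 0 ≤ x ⬝ᵥ x := by
  rw [← sum_sq_eq_dotProduct_self]
  positivity

theorem dotProduct_self_pos {x : ι → R} (hx : x ≠ 0) : 0 < x ⬝ᵥ x :=
  (dotProduct_self_nonneg x).lt_of_ne' (dotProduct_self_eq_zero.not.mpr hx)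

theorem dotProduct_sq_le (x y : ι → R) : (x ⬝ᵥ y) ^ 2 ≤ (x ⬝ᵥ x) * (y ⬝ᵥ y) := by
  rw [← sum_sq_eq_dotProduct_self, ← sum_sq_eq_dotProduct_self]
  exact Finset.sum_mul_sq_le_sq_mul_sq Finset.univ x y

end DotProduct

-- With `V = |v|²`, `Y = |y|²`, `w = v·y`: the pressure–velocity part of the form of `B₀`.
theorem fluid_quadForm_pos {ρ h a ε Γ V Y w p : ℝ} (hρ : 0 < ρ) (ha : 0 < a)
    (hsub : ε ^ 2 * a ^ 2 < h) (hΓ : 0 < Γ) (hΓV : Γ⁻¹ ^ 2 = 1 - ε ^ 2 * V) (hY : 0 ≤ Y)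
    (hw : w ^ 2 ≤ V * Y) (hpY : p ≠ 0 ∨ Y ≠ 0) :
    0 < Γ / (ρ * a ^ 2) * p ^ 2 + 2 * ε ^ 2 * p * w + ρ * h * Γ * (Y - ε ^ 2 * w ^ 2) := by
  rcases hY.eq_or_lt with rfl | hYpos
  · have hp : p ≠ 0 := hpY.resolve_right (not_not.mpr rfl)
    obtain rfl : w = 0 := pow_eq_zero_iff two_ne_zero |>.mp (by nlinarith [sq_nonneg w])
    simp only [mul_zero, add_zero, zero_pow two_ne_zero, sub_zero]
    positivity
  have hh : 0 < h := lt_of_le_of_lt (by positivity) hsub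
  have hεV : ε ^ 2 * V < 1 := by nlinarith [sq_nonneg Γ⁻¹, inv_pos.mpr hΓ]
  have hΓ1 : Γ ^ 2 * (1 - ε ^ 2 * V) = 1 := by rw [← hΓV]; field_simp
  have hsquare : ρ * a ^ 2 * Γ *
        (Γ / (ρ * a ^ 2) * p ^ 2 + 2 * ε ^ 2 * p * w + ρ * h * Γ * (Y - ε ^ 2 * w ^ 2)) =
      (Γ * p + ε ^ 2 * ρ * a ^ 2 * w) ^ 2
        + ρ ^ 2 * a ^ 2 * (h * (Γ ^ 2 * (Y - ε ^ 2 * w ^ 2)) - ε ^ 4 * a ^ 2 * w ^ 2) := by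
    field_simp
    ring
  have hkinetic : Y ≤ Γ ^ 2 * (Y - ε ^ 2 * w ^ 2) := by
    have : Γ ^ 2 * (Y - ε ^ 2 * w ^ 2) - Y = Γ ^ 2 * ε ^ 2 * (V * Y - w ^ 2) := by
      linear_combination Y * hΓ1
    nlinarith [mul_nonneg (sq_nonneg (Γ * ε)) (sub_nonneg.mpr hw)]
  have hpressure : ε ^ 4 * a ^ 2 * w ^ 2 ≤ ε ^ 2 * a ^ 2 * Y := by
    have hεa : 0 ≤ ε ^ 2 * a ^ 2 * Y := by positivity
    nlinarith [mul_le_mul_of_nonneg_left hw (sq_nonneg (ε ^ 2 * a)),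
      mul_le_mul_of_nonneg_left hεV.le hεa]
  have hgap : 0 < h * (Γ ^ 2 * (Y - ε ^ 2 * w ^ 2)) - ε ^ 4 * a ^ 2 * w ^ 2 := by
    nlinarith [mul_le_mul_of_nonneg_left hkinetic hh.le]
  refine pos_of_mul_pos_right (a := ρ * a ^ 2 * Γ) ?_ (by positivity)
  rw [hsquare]
  exact add_pos_of_nonneg_of_pos (sq_nonneg _) (mul_pos (by positivity) hgap)

section RMHD

variable {d : ℕ}

def rmhdVec (p : ℝ) (y z : Fin d → ℝ) (s : ℝ) : RMHDIdx d → ℝ :=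
  Sum.elim (fun _ => p) (Sum.elim y (Sum.elim z fun _ => s))

theorem exists_eq_rmhdVec (x : RMHDIdx d → ℝ) : ∃ p y z s, x = rmhdVec p y z s :=
  ⟨x (.inl ()), fun i => x (.inr (.inl i)), fun i => x (.inr (.inr (.inl i))),
    x (.inr (.inr (.inr ()))), by ext (_ | _ | _ | _) <;> rfl⟩

theorem rmhdVec_eq_zero_iff {p : ℝ} {y z : Fin d → ℝ} {s : ℝ} :
    rmhdVec p y z s = 0 ↔ p = 0 ∧ y = 0 ∧ z = 0 ∧ s = 0 := by
  simp [rmhdVec, funext_iff, Sum.forall]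

theorem rmhdVec_dotProduct (p p' : ℝ) (y y' z z' : Fin d → ℝ) (s s' : ℝ) :
    rmhdVec p y z s ⬝ᵥ rmhdVec p' y' z' s' = p * p' + y ⬝ᵥ y' + z ⬝ᵥ z' + s * s' := by
  simp [rmhdVec, dotProduct, Fintype.sum_sum_type]
  ring

theorem lorentz_pos {ε : ℝ} {v : Fin d → ℝ} (hv : ε ^ 2 * ∑ i, v i ^ 2 < 1) :
    0 < lorentz d ε v :=
  inv_pos.mpr (Real.sqrt_pos.mpr (by linarith))

theorem inv_lorentz_sq {ε : ℝ} {v : Fin d → ℝ} (hv : ε ^ 2 * ∑ i, v i ^ 2 < 1) :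
    (lorentz d ε v)⁻¹ ^ 2 = 1 - ε ^ 2 * (v ⬝ᵥ v) := by
  rw [lorentz, inv_inv, Real.sq_sqrt (by linarith), sum_sq_eq_dotProduct_self]

theorem M0rel_quadForm (ε : ℝ) (v y : Fin d → ℝ) :
    y ⬝ᵥ (M0rel d ε v *ᵥ y) =
      (lorentz d ε v)⁻¹ * (y ⬝ᵥ y + ε ^ 2 * lorentz d ε v ^ 2 * (v ⬝ᵥ y) ^ 2) := by
  simp only [M0rel, smul_mulVec, add_mulVec, one_mulVec, vecMulVec_mulVec, op_smul_eq_smul,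
    dotProduct_smul, dotProduct_add, smul_eq_mul, dotProduct_comm y v]
  ring

theorem M0rel_posDef {ε : ℝ} {v : Fin d → ℝ} (hv : ε ^ 2 * ∑ i, v i ^ 2 < 1) :
    (M0rel d ε v).PosDef := by
  refine .of_dotProduct_mulVec_pos ?_ fun y hy => ?_
  · rw [isHermitian_iff_isSymm, IsSymm, M0rel]
    simp [transpose_vecMulVec]
  · rw [star_trivial, M0rel_quadForm]
    have := dotProduct_self_pos hy
    have := lorentz_pos hv
    positivity

theorem le_calA0_quadForm {ε : ℝ} {v : Fin d → ℝ} (ρ h : ℝ) (H : Fin d → ℝ)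
    (hv : ε ^ 2 * ∑ i, v i ^ 2 < 1) (y : Fin d → ℝ) :
    ρ * h * lorentz d ε v * (y ⬝ᵥ y - ε ^ 2 * (v ⬝ᵥ y) ^ 2) ≤
      y ⬝ᵥ (calA0 d ε ρ h v H *ᵥ y) := by
  set u := y - (ε ^ 2 * (v ⬝ᵥ y)) • v
  have hvH : ∑ i, v i * H i = v ⬝ᵥ H := rfl
  have hquad : y ⬝ᵥ (calA0 d ε ρ h v H *ᵥ y) =
      ρ * h * lorentz d ε v * (y ⬝ᵥ y - ε ^ 2 * (v ⬝ᵥ y) ^ 2)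
        + ε ^ 2 * (lorentz d ε v)⁻¹ * ((H ⬝ᵥ H) * (u ⬝ᵥ u) - (H ⬝ᵥ u) ^ 2) := by
    simp only [u, calA0, bsq, sum_sq_eq_dotProduct_self, hvH, smul_mulVec, add_mulVec,
      sub_mulVec, one_mulVec, vecMulVec_mulVec, op_smul_eq_smul, dotProduct_smul,
      dotProduct_add, dotProduct_sub, sub_dotProduct, smul_dotProduct, smul_eq_mul,
      dotProduct_comm y v, dotProduct_comm y H, dotProduct_comm H v]
    linear_combination
      (-ε ^ 4 * (lorentz d ε v)⁻¹ * (H ⬝ᵥ H) * (v ⬝ᵥ y) ^ 2) * inv_lorentz_sq hv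
  have hΓ := lorentz_pos hv
  have hmagnetic : 0 ≤ (H ⬝ᵥ H) * (u ⬝ᵥ u) - (H ⬝ᵥ u) ^ 2 :=
    sub_nonneg.mpr (dotProduct_sq_le H u)
  rw [hquad, le_add_iff_nonneg_right]
  positivity

theorem B0mat_isSymm (ε ρ h a : ℝ) (v H : Fin d → ℝ) : (B0mat d ε ρ h a v H).IsSymm := by
  have hA : (calA0 d ε ρ h v H).IsSymm := by
    simp [IsSymm, calA0, transpose_vecMulVec, add_comm]
  have hM : (M0rel d ε v).IsSymm := by
    simp [IsSymm, M0rel, transpose_vecMulVec]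
  ext (_ | i | i | _) (_ | j | j | _) <;> simp [B0mat, hA.apply, hM.apply]

theorem B0mat_mulVec_rmhdVec (ε ρ h a : ℝ) (v H : Fin d → ℝ) (p : ℝ) (y z : Fin d → ℝ)
    (s : ℝ) :
    B0mat d ε ρ h a v H *ᵥ rmhdVec p y z s =
      rmhdVec (lorentz d ε v / (ρ * a ^ 2) * p + ε ^ 2 * (v ⬝ᵥ y))
        ((ε ^ 2 * p) • v + calA0 d ε ρ h v H *ᵥ y) (M0rel d ε v *ᵥ z) s := by
  ext (_ | i | i | _) <;>
    simp [rmhdVec, B0mat, mulVec, dotProduct, Fintype.sum_sum_type, Finset.mul_sum] <;> ring_nf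

theorem B0mat_quadForm (ε ρ h a : ℝ) (v H : Fin d → ℝ) (p : ℝ) (y z : Fin d → ℝ)
    (s : ℝ) :
    rmhdVec p y z s ⬝ᵥ (B0mat d ε ρ h a v H *ᵥ rmhdVec p y z s) =
      (lorentz d ε v / (ρ * a ^ 2) * p ^ 2 + 2 * ε ^ 2 * p * (v ⬝ᵥ y)
          + y ⬝ᵥ (calA0 d ε ρ h v H *ᵥ y))
        + z ⬝ᵥ (M0rel d ε v *ᵥ z) + s ^ 2 := by
  rw [B0mat_mulVec_rmhdVec, rmhdVec_dotProduct, dotProduct_add, dotProduct_smul,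
    dotProduct_comm y v, smul_eq_mul]
  ring

theorem B0mat_posDef {ρ h a ε : ℝ} (hρ : 0 < ρ) (ha : 0 < a) (hsub : ε ^ 2 * a ^ 2 < h)
    (v H : Fin d → ℝ) (hv : ε ^ 2 * ∑ i, v i ^ 2 < 1) : (B0mat d ε ρ h a v H).PosDef := by
  refine .of_dotProduct_mulVec_pos (isHermitian_iff_isSymm.mpr (B0mat_isSymm ..)) fun x hx => ?_
  obtain ⟨p, y, z, s, rfl⟩ := exists_eq_rmhdVec x
  rw [star_trivial, B0mat_quadForm]
  have hM := M0rel_posDef hv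
  have hz : 0 ≤ z ⬝ᵥ (M0rel d ε v *ᵥ z) := by
    simpa using hM.posSemidef.dotProduct_mulVec_nonneg z
  by_cases hpy : p = 0 ∧ y = 0
  · obtain ⟨rfl, rfl⟩ := hpy
    have hzs : z ≠ 0 ∨ s ≠ 0 := by
      by_contra! hzs
      exact hx (rmhdVec_eq_zero_iff.mpr ⟨rfl, rfl, hzs.1, hzs.2⟩)
    simp only [mulVec_zero, dotProduct_zero, mul_zero, zero_pow two_ne_zero, add_zero, zero_add]
    rcases hzs with hz' | hs
    · have := hM.dotProduct_mulVec_pos hz'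
      rw [star_trivial] at this
      positivity
    · have : 0 < s ^ 2 := by positivity
      linarith
  · have hfluid : 0 < lorentz d ε v / (ρ * a ^ 2) * p ^ 2 + 2 * ε ^ 2 * p * (v ⬝ᵥ y)
        + ρ * h * lorentz d ε v * (y ⬝ᵥ y - ε ^ 2 * (v ⬝ᵥ y) ^ 2) := by
      refine fluid_quadForm_pos hρ ha hsub (lorentz_pos hv) (inv_lorentz_sq hv)
        (dotProduct_self_nonneg y) (dotProduct_sq_le v y) ?_
      rw [not_and_or] at hpy
      exact hpy.imp_right dotProduct_self_eq_zero.not.mpr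
    nlinarith [le_calA0_quadForm ρ h H hv y, sq_nonneg s]

-- `𝐚` and `𝐛` of the first row `(1, 𝐚ᵀ, -𝐛ᵀ, 0)` of `𝐉`
noncomputable def jacA (ε : ℝ) (v H : Fin d → ℝ) : Fin d → ℝ :=
  fun j => ε ^ 2 * ((∑ k, H k ^ 2) * v j - (∑ k, v k * H k) * H j)

noncomputable def jacB (ε : ℝ) (v H : Fin d → ℝ) : Fin d → ℝ :=
  fun j => (lorentz d ε v)⁻¹ ^ 2 * H j + ε ^ 2 * (∑ k, v k * H k) * v j

theorem Jac_mulVec_rmhdVec (ε : ℝ) (v H : Fin d → ℝ) (p : ℝ) (y z : Fin d → ℝ)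
    (s : ℝ) :
    Jac d ε v H *ᵥ rmhdVec p y z s =
      rmhdVec (p + jacA ε v H ⬝ᵥ y - jacB ε v H ⬝ᵥ z)
        (lorentz d ε v ^ 2 • (M0rel d ε v *ᵥ y)) z s := by
  ext (_ | i | i | _)
  · simp [rmhdVec, Jac, mulVec, dotProduct, Fintype.sum_sum_type, jacA, jacB, sub_eq_add_neg,
      add_assoc]
    rw [← Finset.sum_neg_distrib]
    exact Finset.sum_congr rfl fun _ _ => by ring
  · simp [rmhdVec, Jac, mulVec, dotProduct, Fintype.sum_sum_type, Finset.mul_sum, mul_assoc]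
  all_goals simp [rmhdVec, Jac, mulVec, dotProduct, Fintype.sum_sum_type]

theorem Jac_mulVec_injective {ε : ℝ} {v : Fin d → ℝ} (H : Fin d → ℝ)
    (hv : ε ^ 2 * ∑ i, v i ^ 2 < 1) : Function.Injective (Jac d ε v H).mulVec := by
  rw [← coe_mulVecLin, injective_iff_map_eq_zero]
  intro x hx
  obtain ⟨p, y, z, s, rfl⟩ := exists_eq_rmhdVec x
  rw [coe_mulVecLin, Jac_mulVec_rmhdVec, rmhdVec_eq_zero_iff] at hx
  obtain ⟨hp, hy, rfl, rfl⟩ := hx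
  obtain rfl : y = 0 := mulVec_injective_of_isUnit (M0rel_posDef hv).isUnit <| by
    simpa [(lorentz_pos hv).ne'] using hy
  simp only [dotProduct_zero, add_zero, sub_zero] at hp
  exact rmhdVec_eq_zero_iff.mpr ⟨hp, rfl, rfl, rfl⟩

end RMHD

theorem stmt16_general (d : ℕ) (ρ h a ε : ℝ)
    (hρ : 0 < ρ) (ha : 0 < a) (hsub : ε ^ 2 * a ^ 2 < h)
    (v H : Fin d → ℝ) (hv : ε ^ 2 * ∑ i, v i ^ 2 < 1) :
    ((Jac d ε v H)ᵀ * B0mat d ε ρ h a v H * Jac d ε v H).IsSymm ∧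
    ((Jac d ε v H)ᵀ * B0mat d ε ρ h a v H * Jac d ε v H).PosDef := by
  have hA₀ : ((Jac d ε v H)ᵀ * B0mat d ε ρ h a v H * Jac d ε v H).PosDef := by
    simpa [conjTranspose_eq_transpose_of_trivial] using
      (B0mat_posDef hρ ha hsub v H hv).conjTranspose_mul_mul_same (Jac_mulVec_injective H hv)
  exact ⟨isHermitian_iff_isSymm.mp hA₀.isHermitian, hA₀⟩

/-- The matrix `A₀(U) = 𝐉ᵀ B₀(V) 𝐉` of ideal relativistic MHD in the primary unknowns
`U = (q, v, H, S)` is symmetric positive definite. -/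
theorem stmt16 (d : ℕ) (hd : d = 2 ∨ d = 3) (ρ h a ε : ℝ)
    (hρ : 0 < ρ) (hh : 0 < h) (ha : 0 < a) (hε : 0 < ε) (hsub : ε ^ 2 * a ^ 2 < h)
    (v H : Fin d → ℝ) (hv : ε ^ 2 * ∑ i, v i ^ 2 < 1) :
    ((Jac d ε v H)ᵀ * B0mat d ε ρ h a v H * Jac d ε v H).IsSymm ∧
    ((Jac d ε v H)ᵀ * B0mat d ε ρ h a v H * Jac d ε v H).PosDef :=
  stmt16_general d ρ h a ε hρ ha hsub v H hv
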